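/- arXiv:2403.10274 — 2 statements merged into one kernel-verified Lean document; each statement's English description precedes it below -/
import Mathlib

section
/- The bilinear form β on the spin representation Cl(V)f defined by f* a* b f = β(af, bf)·f is nondegenerate and Spin(V)-invariant; it is symmetric if n ≡ 0,1 (mod 4) and skew-symmetric if n ≡ 2,3 (mod 4); and the two half-spin representations Cl⁺(V)f, Cl⁻(V)f are orthogonal complements of each other under β when n is odd, while each is nondegenerately paired with itself when n is even. -/
/-!
The vectors `f i` are pairwise orthogonal, so the generators `ι (f i)` anticommute and
`F = ι f₁ ⋯ ι fₙ` has parity `n` and satisfies `F* = (-1)^(n(n-1)/2) F`. Applying `*` to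
`(aF)*(bF) = β(a,b) F` gives `β(b,a) = (-1)^(n(n-1)/2) β(a,b)`, and comparing parities
gives the orthogonality relations between the half-spin spaces. Invariance is
`(xaF)*(xbF) = (aF)* x* x (bF)`. The symbol map `Cl(V) ≃ ⋀V` sends `F` to `f₁ ∧ ⋯ ∧ fₙ ≠ 0`.
For nondegeneracy pick `eᵢ` with `(eᵢ|fⱼ) = δᵢⱼ`: since `ι eᵢ ι fᵢ + ι fᵢ ι eᵢ = 1` and `ι eᵢ`
anticommutes with the later factors, the two-sided ideal generated by `F` contains `1`, so
`(aF)*`, which kills it, vanishes.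
-/

open CliffordAlgebra

/-- The bilinear form `(v|w) = ½(q(v+w) − q(v) − q(w))` associated to `q`. -/
noncomputable def halfPolar {K V : Type*} [Field K] [CharZero K] [AddCommGroup V] [Module K V]
    (q : QuadraticForm K V) : V →ₗ[K] Module.Dual K V :=
  (2⁻¹ : K) • (QuadraticMap.polarBilin q)

theorem Nat.even_choose_two_iff (n : ℕ) : Even (n.choose 2) ↔ n % 4 = 0 ∨ n % 4 = 1 := by
  induction n with
  | zero => simp
  | succ n ih =>
    rw [Nat.choose_succ_succ', Nat.choose_one_right, Nat.even_add, ih, Nat.even_iff]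
    omega

theorem ExteriorAlgebra.ιMulti_ne_zero_of_linearIndependent {K E : Type*} [Field K]
    [AddCommGroup E] [Module K E] {n : ℕ} {v : Fin n → E} (hv : LinearIndependent K v) :
    ExteriorAlgebra.ιMulti K n v ≠ 0 := by
  have := (exteriorPower.ιMulti_family_linearIndependent_field (n := n) hv).ne_zero
    (Set.powersetCard.ofFinEmbEquiv (OrderIso.refl (Fin n)).toOrderEmbedding)
  intro h
  exact this (Subtype.ext (by simpa [exteriorPower.ιMulti_family] using h))

theorem LinearIndependent.exists_dual_apply_eq_ite {K V ι : Type*} [Field K] [AddCommGroup V]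
    [Module K V] [DecidableEq ι] {v : ι → V} (hv : LinearIndependent K v) :
    ∃ d : ι → Module.Dual K V, ∀ i j, d i (v j) = if i = j then 1 else 0 := by
  classical
  refine ⟨fun i => (Module.Basis.sumExtend hv).coord (Sum.inl i), fun i j => ?_⟩
  have : Module.Basis.sumExtend hv (Sum.inl j) = v j := by
    simp [Module.Basis.sumExtend]; rfl
  rw [← this, Module.Basis.coord_apply, Module.Basis.repr_self, Finsupp.single_apply]
  simp [eq_comm]

section CommRing

variable {R M : Type*} [CommRing R] [AddCommGroup M] [Module R M] {Q : QuadraticForm R M}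

theorem ι_mul_prod_map_ι_of_isOrtho {a : M} {l : List M} (h : ∀ v ∈ l, Q.IsOrtho a v) :
    ι Q a * (l.map (ι Q)).prod = (-1 : R) ^ l.length • ((l.map (ι Q)).prod * ι Q a) := by
  induction l with
  | nil => simp
  | cons v l ih =>
    rw [List.map_cons, List.prod_cons, ι_mul_ι_mul_of_isOrtho _ (h v List.mem_cons_self),
      ih fun w hw => h w (List.mem_cons_of_mem _ hw), mul_smul_comm, List.length_cons, pow_succ,
      mul_neg_one, neg_smul, mul_assoc]

theorem reverse_prod_map_ι_of_pairwise {l : List M} (hl : l.Pairwise Q.IsOrtho) :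
    reverse (l.map (ι Q)).prod = (-1 : R) ^ l.length.choose 2 • (l.map (ι Q)).prod := by
  induction l with
  | nil => simp
  | cons v l ih =>
    rw [List.pairwise_cons] at hl
    rw [List.map_cons, List.prod_cons, reverse.map_mul, reverse_ι, ih hl.2, smul_mul_assoc,
      ι_mul_prod_map_ι_of_isOrtho hl.1, smul_smul, ← pow_add, List.length_cons,
      Nat.choose_succ_succ', Nat.choose_one_right]
    congr 1
    rw [show l.length + l.length.choose 2 + l.length = l.length.choose 2 + 2 * l.length by ring,
      pow_add, pow_mul]
    simp

variable (Q) in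
theorem prod_map_ι_mem_evenOdd (l : List M) : (l.map (ι Q)).prod ∈ evenOdd Q l.length := by
  simpa using SetLike.list_prod_map_mem_graded l (fun _ => (1 : ZMod 2)) (ι Q)
    fun v _ => ι_mem_evenOdd_one Q v

theorem contractLeft_prod_map_ι_eq_zero {d : Module.Dual R M} {l : List M}
    (h : ∀ v ∈ l, d v = 0) : contractLeft d (l.map (ι Q)).prod = 0 := by
  induction l with
  | nil => simp
  | cons v l ih =>
    rw [List.map_cons, List.prod_cons, contractLeft_ι_mul, h v List.mem_cons_self,
      ih fun w hw => h w (List.mem_cons_of_mem _ hw)]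
    simp

theorem changeForm_prod_map_ι {Q' : QuadraticForm R M} {B : LinearMap.BilinForm R M}
    (h : B.toQuadraticMap = Q' - Q) {l : List M} (hl : l.Pairwise fun v w => B v w = 0) :
    changeForm h (l.map (ι Q)).prod = (l.map (ι Q')).prod := by
  induction l with
  | nil => simp
  | cons v l ih =>
    rw [List.pairwise_cons] at hl
    rw [List.map_cons, List.prod_cons, changeForm_ι_mul, ih hl.2,
      contractLeft_prod_map_ι_eq_zero hl.1, sub_zero, List.map_cons, List.prod_cons]

theorem eq_zero_of_forall_mul_mul_prod_ofFn_mul_eq_zero {n : ℕ} {e f : Fin n → M}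
    (hef : ∀ i j, QuadraticMap.polar Q (e i) (f j) = if i = j then 1 else 0)
    {c : CliffordAlgebra Q}
    (hc : ∀ x y, c * x * ((List.ofFn f).map (ι Q)).prod * y = 0) : c = 0 := by
  induction n with
  | zero => simpa using hc 1 1
  | succ n ih =>
    refine ih (e := fun i => e i.succ) (f := fun i => f i.succ)
      (fun i j => by simpa using hef i.succ j.succ) fun x y => ?_
    set P := ((List.ofFn fun i => f i.succ).map (ι Q)).prod
    have hc' : ∀ x y, c * x * (ι Q (f 0) * P) * y = 0 := fun x y => by
      simpa [List.ofFn_succ, P] using hc x y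
    have hortho : ∀ v ∈ List.ofFn (fun i => f i.succ), Q.IsOrtho (e 0) v := by
      simp only [List.mem_ofFn, forall_exists_index, forall_apply_eq_imp_iff]
      exact fun j => QuadraticMap.isOrtho_polarBilin.mp <| by
        rw [QuadraticMap.polarBilin_apply_apply, hef, if_neg (Fin.succ_ne_zero j).symm]
    have hunit : ι Q (e 0) * ι Q (f 0) + ι Q (f 0) * ι Q (e 0) = 1 := by
      simp [ι_mul_ι_add_swap, hef]
    have hP := ι_mul_prod_map_ι_of_isOrtho hortho
    rw [List.length_ofFn] at hP
    have hsplit : P = ι Q (e 0) * (ι Q (f 0) * P) + (-1 : R) ^ n • (ι Q (f 0) * P * ι Q (e 0)) :=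
      calc P = (ι Q (e 0) * ι Q (f 0) + ι Q (f 0) * ι Q (e 0)) * P := by rw [hunit, one_mul]
        _ = ι Q (e 0) * (ι Q (f 0) * P) + ι Q (f 0) * (ι Q (e 0) * P) := by
          rw [add_mul, mul_assoc, mul_assoc]
        _ = _ := by rw [hP, mul_smul_comm, mul_assoc]
    have hleft := hc' (x * ι Q (e 0)) y
    have hright := hc' x (ι Q (e 0) * y)
    simp only [← mul_assoc] at hleft hright
    rw [hsplit, mul_add, add_mul, mul_smul_comm, smul_mul_assoc]
    simp only [← mul_assoc]
    rw [hleft, hright, smul_zero, add_zero]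

end CommRing

section Field

variable {K V : Type*} [Field K] [AddCommGroup V] [Module K V] {Q : QuadraticForm K V}

theorem prod_map_ι_ofFn_ne_zero [Invertible (2 : K)] {n : ℕ} {f : Fin n → V}
    (hf : LinearIndependent K f) (hortho : ∀ i j, Q.IsOrtho (f i) (f j)) :
    ((List.ofFn f).map (ι Q)).prod ≠ 0 := by
  have hpw : (List.ofFn f).Pairwise fun v w => QuadraticMap.associated (-Q) v w = 0 :=
    List.pairwise_ofFn.mpr fun i j _ => by
      rw [map_neg, LinearMap.neg_apply, LinearMap.neg_apply, neg_eq_zero,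
        QuadraticMap.associated_isOrtho]
      exact hortho i j
  intro h
  apply ExteriorAlgebra.ιMulti_ne_zero_of_linearIndependent hf
  have := congrArg (equivExterior Q) h
  rw [equivExterior, changeFormEquiv_apply, changeForm_prod_map_ι _ hpw, map_zero,
    List.map_ofFn] at this
  rw [ExteriorAlgebra.ιMulti_apply]
  exact this

theorem exists_polar_apply_eq_ite [FiniteDimensional K V] {ι : Type*} [DecidableEq ι]
    (hQ : Q.polarBilin.Nondegenerate) {f : ι → V} (hf : LinearIndependent K f) :
    ∃ e : ι → V, ∀ i j, QuadraticMap.polar Q (e i) (f j) = if i = j then 1 else 0 := by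
  obtain ⟨d, hd⟩ := hf.exists_dual_apply_eq_ite
  refine ⟨fun i => (LinearMap.BilinForm.toDual Q.polarBilin hQ).symm (d i), fun i j => ?_⟩
  rw [← QuadraticMap.polarBilin_apply_apply, LinearMap.BilinForm.apply_toDual_symm_apply, hd]

end Field

section Pairing

variable {K V : Type*} [Field K] [AddCommGroup V] [Module K V] (Q : QuadraticForm K V)

def IsReversePairing (F : CliffordAlgebra Q) (β : CliffordAlgebra Q → CliffordAlgebra Q → K) :
    Prop :=
  ∀ a b, reverse (a * F) * (b * F) = β a b • F

variable {Q} {F : CliffordAlgebra Q} {β : CliffordAlgebra Q → CliffordAlgebra Q → K}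

namespace IsReversePairing

theorem apply_mul_mul (hβ : IsReversePairing Q F β) (hF : F ≠ 0)
    {x : CliffordAlgebra Q} (hx : reverse x * x = 1) (a b : CliffordAlgebra Q) :
    β (x * a) (x * b) = β a b := by
  apply smul_left_injective K hF
  simp only
  rw [← hβ, ← hβ, mul_assoc x a, mul_assoc x b, reverse.map_mul, mul_assoc,
    ← mul_assoc (reverse x), hx, one_mul]

theorem apply_swap (hβ : IsReversePairing Q F β) (hF : F ≠ 0)
    {s : K} (hs : reverse F = s • F) (a b : CliffordAlgebra Q) :
    β b a = s * β a b := by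
  apply smul_left_injective K hF
  have := congrArg reverse (hβ a b)
  rw [reverse.map_mul, reverse_reverse, hβ, map_smul, hs, smul_smul, mul_comm] at this
  exact this

theorem apply_add_right (hβ : IsReversePairing Q F β) (hF : F ≠ 0)
    (a b c : CliffordAlgebra Q) : β a (b + c) = β a b + β a c := by
  apply smul_left_injective K hF
  simp only [add_smul]
  rw [← hβ, ← hβ, ← hβ, add_mul, mul_add]

theorem apply_eq_zero_of_mem_evenOdd (hβ : IsReversePairing Q F β) (hF : F ≠ 0)
    {i j k : ZMod 2} (hFk : F ∈ evenOdd Q k) (hijk : i + j ≠ k)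
    {a b : CliffordAlgebra Q} (ha : a ∈ evenOdd Q i) (hb : b ∈ evenOdd Q j) : β a b = 0 := by
  by_contra hab
  have hmem : β a b • F ∈ evenOdd Q (i + j) := by
    rw [← hβ, ← add_zero (i + j), ← CharTwo.add_self_eq_zero k, add_add_add_comm]
    exact SetLike.mul_mem_graded ((reverse_mem_evenOdd_iff Q).mpr (SetLike.mul_mem_graded ha hFk))
      (SetLike.mul_mem_graded hb hFk)
  exact hijk (DirectSum.degree_eq_of_mem_mem (evenOdd Q) hmem (Submodule.smul_mem _ _ hFk)
    (smul_ne_zero hab hF))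

theorem mul_eq_zero_of_forall_apply_eq_zero (hβ : IsReversePairing Q F β)
    (hann : ∀ c, (∀ x y, c * x * F * y = 0) → c = 0) {a : CliffordAlgebra Q}
    (ha : ∀ b, β a b = 0) : a * F = 0 := by
  have : reverse (a * F) = 0 :=
    hann _ fun x y => by rw [mul_assoc _ x, hβ, ha, zero_smul, zero_mul]
  simpa using congrArg reverse this

theorem apply_eq_zero_of_forall_mem_evenOdd (hβ : IsReversePairing Q F β) (hF : F ≠ 0)
    (hF0 : F ∈ evenOdd Q 0) {i : ZMod 2} {a : CliffordAlgebra Q} (ha : a ∈ evenOdd Q i)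
    (h : ∀ b ∈ evenOdd Q i, β a b = 0) (b : CliffordAlgebra Q) : β a b = 0 := by
  obtain ⟨b₀, hb₀, b₁, hb₁, rfl⟩ :=
    Submodule.mem_sup.mp ((evenOdd_isCompl Q).sup_eq_top ▸ Submodule.mem_top : b ∈ _)
  rw [hβ.apply_add_right hF]
  fin_cases i
  · rw [h b₀ hb₀, hβ.apply_eq_zero_of_mem_evenOdd hF hF0 (by decide) ha hb₁, add_zero]
  · rw [hβ.apply_eq_zero_of_mem_evenOdd hF hF0 (by decide) ha hb₀, h b₁ hb₁, zero_add]

end IsReversePairing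

end Pairing

theorem stmt13_general {K V : Type*} [Field K] [CharZero K]
    [AddCommGroup V] [Module K V] [FiniteDimensional K V]
    (q : QuadraticForm K V) (n : ℕ)
    (hq : (QuadraticMap.polarBilin q).Nondegenerate)
    (f : Fin n → V) (hf : LinearIndependent K f)
    (hff : ∀ i j, halfPolar q (f i) (f j) = 0)
    -- the bilinear form β, via its defining property (af)*(bf) = β(af,bf)·f
    (β : CliffordAlgebra q → CliffordAlgebra q → K)
    (hβ : ∀ a b : CliffordAlgebra q,
      reverse (a * ((List.ofFn f).map (ι q)).prod) * (b * ((List.ofFn f).map (ι q)).prod)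
        = β a b • ((List.ofFn f).map (ι q)).prod) :
    -- β is Spin(V)-invariant …
    (∀ x a b : CliffordAlgebra q,
      (∀ v : V, ∃ w : V, x * ι q v = ι q w * x) →
      x * reverse x = 1 → reverse x * x = 1 →
      β (x * a) (x * b) = β a b) ∧
    -- … and nondegenerate
    (∀ a : CliffordAlgebra q, (∀ b : CliffordAlgebra q, β a b = 0) →
      a * ((List.ofFn f).map (ι q)).prod = 0) ∧
    -- symmetric when n ≡ 0,1 (mod 4)
    ((n % 4 = 0 ∨ n % 4 = 1) → ∀ a b, β a b = β b a) ∧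
    -- skew-symmetric when n ≡ 2,3 (mod 4)
    ((n % 4 = 2 ∨ n % 4 = 3) → ∀ a b, β a b = - β b a) ∧
    -- for n odd, the two half-spin representations pair with each other
    (Odd n →
      (∀ a ∈ evenOdd q 0, ∀ b ∈ evenOdd q 0, β a b = 0) ∧
      (∀ a ∈ evenOdd q 1, ∀ b ∈ evenOdd q 1, β a b = 0)) ∧
    -- for n even, each half-spin representation is nondegenerately self-paired
    (Even n →
      (∀ a ∈ evenOdd q 0, ∀ b ∈ evenOdd q 1, β a b = 0) ∧
      (∀ a ∈ evenOdd q 1, ∀ b ∈ evenOdd q 0, β a b = 0) ∧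
      (∀ a ∈ evenOdd q 0, (∀ b ∈ evenOdd q 0, β a b = 0) →
        a * ((List.ofFn f).map (ι q)).prod = 0) ∧
      (∀ a ∈ evenOdd q 1, (∀ b ∈ evenOdd q 1, β a b = 0) →
        a * ((List.ofFn f).map (ι q)).prod = 0)) := by
  set F := ((List.ofFn f).map (ι q)).prod
  have hβ' : IsReversePairing q F β := hβ
  have hortho : ∀ i j, q.IsOrtho (f i) (f j) := fun i j =>
    QuadraticMap.isOrtho_polarBilin.mp (by simpa [halfPolar] using hff i j)
  have : Invertible (2 : K) := invertibleOfNonzero two_ne_zero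
  have hF : F ≠ 0 := prod_map_ι_ofFn_ne_zero hf hortho
  have hrev : reverse F = (-1 : K) ^ n.choose 2 • F := by
    have := reverse_prod_map_ι_of_pairwise (List.pairwise_ofFn.mpr fun i j _ => hortho i j)
    rwa [List.length_ofFn] at this
  have hFn : F ∈ evenOdd q n := by
    simpa only [List.length_ofFn] using prod_map_ι_mem_evenOdd q (List.ofFn f)
  obtain ⟨e, he⟩ := exists_polar_apply_eq_ite hq hf
  have hnd : ∀ a, (∀ b, β a b = 0) → a * F = 0 := fun a =>
    hβ'.mul_eq_zero_of_forall_apply_eq_zero fun c hc =>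
      eq_zero_of_forall_mul_mul_prod_ofFn_mul_eq_zero he hc
  refine ⟨fun x a b _ _ hx => hβ'.apply_mul_mul hF hx a b, hnd, fun h4 a b => ?_,
    fun h4 a b => ?_, fun hn => ?_, fun hn => ?_⟩
  · rw [hβ'.apply_swap hF hrev b a, ((Nat.even_choose_two_iff n).mpr h4).neg_one_pow, one_mul]
  · have : Odd (n.choose 2) := Nat.not_even_iff_odd.mp (by rw [Nat.even_choose_two_iff]; omega)
    rw [hβ'.apply_swap hF hrev b a, this.neg_one_pow, neg_one_mul]
  · rw [ZMod.natCast_eq_one_iff_odd.mpr hn] at hFn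
    exact ⟨fun a ha b hb => hβ'.apply_eq_zero_of_mem_evenOdd hF hFn (by decide) ha hb,
      fun a ha b hb => hβ'.apply_eq_zero_of_mem_evenOdd hF hFn (by decide) ha hb⟩
  · rw [ZMod.natCast_eq_zero_iff_even.mpr hn] at hFn
    exact ⟨fun a ha b hb => hβ'.apply_eq_zero_of_mem_evenOdd hF hFn (by decide) ha hb,
      fun a ha b hb => hβ'.apply_eq_zero_of_mem_evenOdd hF hFn (by decide) ha hb,
      fun a ha h => hnd a (hβ'.apply_eq_zero_of_forall_mem_evenOdd hF hFn ha h),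
      fun a ha h => hnd a (hβ'.apply_eq_zero_of_forall_mem_evenOdd hF hFn ha h)⟩

/-- the bilinear form `β` on the spin representation `Cl(V)f`, defined by
`(af)*(bf) = f*a*bf = β(af,bf)·f` (with `*` the reversal anti-automorphism), is
nondegenerate and `Spin(V)`-invariant; it is symmetric for `n ≡ 0,1 (mod 4)` and
skew-symmetric for `n ≡ 2,3 (mod 4)`; the two half-spin representations are paired with
each other when `n` is odd (so even–even and odd–odd products vanish), and each is
nondegenerately paired with itself when `n` is even (so even–odd products vanish). -/
theorem stmt13 {K V : Type*} [Field K] [IsAlgClosed K] [CharZero K]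
    [AddCommGroup V] [Module K V] [FiniteDimensional K V]
    (q : QuadraticForm K V) (n : ℕ)
    (hdim : Module.finrank K V = 2 * n)
    (hq : (QuadraticMap.polarBilin q).Nondegenerate)
    (f : Fin n → V) (hf : LinearIndependent K f)
    (hff : ∀ i j, halfPolar q (f i) (f j) = 0)
    -- the bilinear form β, via its defining property (af)*(bf) = β(af,bf)·f
    (β : CliffordAlgebra q → CliffordAlgebra q → K)
    (hβ : ∀ a b : CliffordAlgebra q,
      reverse (a * ((List.ofFn f).map (ι q)).prod) * (b * ((List.ofFn f).map (ι q)).prod)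
        = β a b • ((List.ofFn f).map (ι q)).prod) :
    -- β is Spin(V)-invariant …
    (∀ x a b : CliffordAlgebra q,
      (∀ v : V, ∃ w : V, x * ι q v = ι q w * x) →
      x * reverse x = 1 → reverse x * x = 1 →
      β (x * a) (x * b) = β a b) ∧
    -- … and nondegenerate
    (∀ a : CliffordAlgebra q, (∀ b : CliffordAlgebra q, β a b = 0) →
      a * ((List.ofFn f).map (ι q)).prod = 0) ∧
    -- symmetric when n ≡ 0,1 (mod 4)
    ((n % 4 = 0 ∨ n % 4 = 1) → ∀ a b, β a b = β b a) ∧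
    -- skew-symmetric when n ≡ 2,3 (mod 4)
    ((n % 4 = 2 ∨ n % 4 = 3) → ∀ a b, β a b = - β b a) ∧
    -- for n odd, the two half-spin representations pair with each other
    (Odd n →
      (∀ a ∈ evenOdd q 0, ∀ b ∈ evenOdd q 0, β a b = 0) ∧
      (∀ a ∈ evenOdd q 1, ∀ b ∈ evenOdd q 1, β a b = 0)) ∧
    -- for n even, each half-spin representation is nondegenerately self-paired
    (Even n →
      (∀ a ∈ evenOdd q 0, ∀ b ∈ evenOdd q 1, β a b = 0) ∧
      (∀ a ∈ evenOdd q 1, ∀ b ∈ evenOdd q 0, β a b = 0) ∧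
      (∀ a ∈ evenOdd q 0, (∀ b ∈ evenOdd q 0, β a b = 0) →
        a * ((List.ofFn f).map (ι q)).prod = 0) ∧
      (∀ a ∈ evenOdd q 1, (∀ b ∈ evenOdd q 1, β a b = 0) →
        a * ((List.ofFn f).map (ι q)).prod = 0)) :=
  stmt13_general q n hq f hf hff β hβ
end

section
/- The Cartan map carries spinors of isotropic subspaces to decomposable tensors: for a maximal isotropic subspace H ⊆ V meeting F in a k-dimensional space, with adapted hyperbolic basis so that H = ⟨e_{k+1},…,e_n,f₁,…,f_k⟩ and ω_H = e_{k+1}⋯e_n f, setting a = e_{k+1}⋯e_n one has, in the Clifford algebra, a f a* = 2^{n−k} e_{k+1}⋯e_n f₁⋯f_k, and hence (a f a*) • 1 = 2^{n−k} e_{k+1}∧⋯∧e_n∧f₁∧⋯∧f_k ∈ ⋀ⁿV. In particular the Cartan map ν̂₂(af) = [component in ⋀ⁿV of (afa*) • 1] sends the spinor line of H to the Plücker line of H, so ν̂₂ maps the isotropic Grassmann cone in its spinor embedding onto the isotropic Grassmann cone in its Plücker embedding. -/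
/-! Extend `e`, `f` by zero to families indexed by `ℕ`; vanishing pairings stay true for all
indices. In `Cl(V)` the product `a = e_k⋯e_{n-1}` kills every `e_m` (`k ≤ m`) from the right,
since these vectors are isotropic and pairwise orthogonal. Peel `a* = e_{n-1}⋯e_k` off from the
right: `f_0⋯f_m e_m = f_0⋯f_{m-1} (2 - e_m f_m)`, and `e_m` anticommutes through `f_0⋯f_{m-1}`
into `a`, where it dies; so each step contributes a factor `2`. On `⋀V`, a product of vectors
each orthogonal to all later ones acts on `1` by pure wedging, as every contraction meets a
vector it pairs to zero with. -/

open CliffordAlgebra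

/-- The ordered Clifford product of the vectors `g i`, `i ∈ s` (in increasing order). -/
noncomputable def cliffProdOn {K V : Type*} [Field K] [AddCommGroup V] [Module K V]
    (q : QuadraticForm K V) {m : ℕ} (g : Fin m → V) (s : Finset (Fin m)) :
    CliffordAlgebra q :=
  ((s.sort (· ≤ ·)).map (fun i => ι q (g i))).prod

/-- The ordered wedge product of the vectors `g i`, `i ∈ s` (in increasing order). -/
noncomputable def extProdOn (K : Type*) {V : Type*} [Field K] [AddCommGroup V] [Module K V]
    {m : ℕ} (g : Fin m → V) (s : Finset (Fin m)) : ExteriorAlgebra K V :=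
  ((s.sort (· ≤ ·)).map (fun i => ExteriorAlgebra.ι K (g i))).prod

theorem Finset.map_val_sort_eq {n : ℕ} (s : Finset (Fin n)) {l : List ℕ} (hl : l.SortedLT)
    (hmem : ∀ j, j ∈ l ↔ ∃ h : j < n, (⟨j, h⟩ : Fin n) ∈ s) :
    (s.sort (· ≤ ·)).map Fin.val = l :=
  (Fin.val_strictMono.sortedLT_listMap.mpr s.sortedLT_sort).eq_of_mem_iff hl fun j => by
    simp only [List.mem_map, Finset.mem_sort, hmem]
    exact ⟨fun ⟨i, hi, hij⟩ => ⟨hij ▸ i.isLt, by subst hij; exact hi⟩,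
      fun ⟨_, hj⟩ => ⟨_, hj, rfl⟩⟩

theorem Fin.map_val_sort_filter_le (n k : ℕ) :
    ((Finset.univ.filter fun i : Fin n => k ≤ (i : ℕ)).sort (· ≤ ·)).map Fin.val
      = List.range' k (n - k) :=
  Finset.map_val_sort_eq _ (List.sortedLT_range' _ _ one_ne_zero) fun j => by
    simp only [List.mem_range'_1, Finset.mem_filter, Finset.mem_univ, true_and, exists_prop]
    omega

theorem Fin.map_val_sort_filter_lt {n k : ℕ} (hk : k ≤ n) :
    ((Finset.univ.filter fun i : Fin n => (i : ℕ) < k).sort (· ≤ ·)).map Fin.val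
      = List.range k :=
  Finset.map_val_sort_eq _ (List.sortedLT_range k) fun j => by
    simp only [List.mem_range, Finset.mem_filter, Finset.mem_univ, true_and, exists_prop]
    omega

theorem Fin.map_val_sort_univ (n : ℕ) :
    ((Finset.univ : Finset (Fin n)).sort (· ≤ ·)).map Fin.val = List.range n :=
  Finset.map_val_sort_eq _ (List.sortedLT_range n) fun j => by simp

theorem Fin.extend_val_apply {α : Type*} [Zero α] {n : ℕ} (g : Fin n → α) (j : ℕ) :
    Function.extend Fin.val g 0 j = if h : j < n then g ⟨j, h⟩ else 0 := by
  split_ifs with h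
  · exact Fin.val_injective.extend_apply g 0 ⟨j, h⟩
  · exact Function.extend_apply' _ _ _ fun ⟨i, hi⟩ => h (hi ▸ i.isLt)

theorem List.map_comp_eq_map_extend_val {α β : Type*} [Zero α] {n : ℕ} (g : Fin n → α)
    (h : α → β) (l : List (Fin n)) :
    l.map (fun i => h (g i)) = ((l.map Fin.val).map (Function.extend Fin.val g 0)).map h := by
  simp [List.map_map, Function.comp_def, Fin.val_injective.extend_apply]

theorem LinearMap.extend_val_apply_eq_zero {R M N P : Type*} [CommSemiring R]
    [AddCommMonoid M] [AddCommMonoid N] [AddCommMonoid P] [Module R M] [Module R N] [Module R P]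
    (B : M →ₗ[R] N →ₗ[R] P) {n : ℕ} {g : Fin n → M} {h : Fin n → N}
    {r : ℕ → ℕ → Prop}
    (hB : ∀ a b : Fin n, r a b → B (g a) (h b) = 0) {i j : ℕ} (hij : r i j) :
    B (Function.extend Fin.val g 0 i) (Function.extend Fin.val h 0 j) = 0 := by
  rw [Fin.extend_val_apply, Fin.extend_val_apply]
  split_ifs with hi hj
  · exact hB _ _ hij
  all_goals simp

section HalfPolar

variable {K V : Type*} [Field K] [CharZero K] [AddCommGroup V] [Module K V]
  (q : QuadraticForm K V)

theorem halfPolar_apply (x y : V) : halfPolar q x y = 2⁻¹ * QuadraticMap.polar q x y := by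
  simp [halfPolar, QuadraticMap.polarBilin_apply_apply]

theorem halfPolar_self (x : V) : halfPolar q x x = q x := by
  rw [halfPolar_apply, QuadraticMap.polar_self, nsmul_eq_mul, Nat.cast_ofNat,
    inv_mul_cancel_left₀ two_ne_zero]

theorem halfPolar_eq_zero_iff {x y : V} : halfPolar q x y = 0 ↔ q.IsOrtho x y := by
  rw [← QuadraticMap.isOrtho_polarBilin, QuadraticMap.polarBilin_apply_apply, halfPolar_apply,
    mul_eq_zero, or_iff_right (inv_ne_zero two_ne_zero)]

theorem polar_eq_two_of_halfPolar_eq_one {x y : V} (h : halfPolar q x y = 1) :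
    QuadraticMap.polar q x y = 2 := by
  rw [halfPolar_apply, inv_mul_eq_one₀ two_ne_zero] at h
  exact h.symm

end HalfPolar

namespace CliffordAlgebra

variable {R M : Type*} [CommRing R] [AddCommGroup M] [Module R M] {Q : QuadraticForm R M}

theorem prod_map_ι_mul_ι_of_isOrtho {w : M} {l : List M} (h : ∀ x ∈ l, Q.IsOrtho x w) :
    (l.map (ι Q)).prod * ι Q w = (-1 : R) ^ l.length • (ι Q w * (l.map (ι Q)).prod) := by
  induction l with
  | nil => simp
  | cons x t ih =>
    rw [List.map_cons, List.prod_cons, mul_assoc, ih fun y hy => h y (.tail _ hy),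
      mul_smul_comm, ← mul_assoc, ι_mul_ι_comm_of_isOrtho (h x (.head _)), List.length_cons,
      pow_succ, mul_smul]
    simp [mul_assoc]

theorem prod_map_ι_mul_ι_eq_zero {w : M} {l : List M} (hw : w ∈ l) (hQ : Q w = 0)
    (h : ∀ x ∈ l, Q.IsOrtho x w) : (l.map (ι Q)).prod * ι Q w = 0 := by
  induction l with
  | nil => simp at hw
  | cons x t ih =>
    have ht : ∀ y ∈ t, Q.IsOrtho y w := fun y hy => h y (.tail _ hy)
    rw [List.map_cons, List.prod_cons, mul_assoc]
    rcases List.mem_cons.mp hw with rfl | hwt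
    · rw [prod_map_ι_mul_ι_of_isOrtho ht, mul_smul_comm, ← mul_assoc, ι_sq_scalar, hQ,
        map_zero, zero_mul, smul_zero]
    · rw [ih hwt ht, mul_zero]

theorem mul_prod_map_ι_mul_ι_mul_ι {x : CliffordAlgebra Q} {u w : M} {l : List M}
    (hx : x * ι Q w = 0) (hl : ∀ y ∈ l, Q.IsOrtho y w) :
    x * (l.map (ι Q)).prod * ι Q u * ι Q w
      = QuadraticMap.polar Q u w • (x * (l.map (ι Q)).prod) := by
  have hxlw : x * (l.map (ι Q)).prod * ι Q w = 0 := by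
    rw [mul_assoc, prod_map_ι_mul_ι_of_isOrtho hl, mul_smul_comm, ← mul_assoc, hx, zero_mul,
      smul_zero]
  rw [mul_assoc _ (ι Q u), eq_sub_of_add_eq (ι_mul_ι_add_swap u w), mul_sub,
    ← mul_assoc, hxlw, zero_mul, sub_zero, ← Algebra.commutes, ← Algebra.smul_def]

theorem mul_prod_range_mul_reverse_prod_range' (e f : ℕ → M) {x : CliffordAlgebra Q} {c : R}
    (hfe : ∀ i j, j < i → Q.IsOrtho (f j) (e i)) :
    ∀ {m d : ℕ}, (∀ i, m ≤ i → i < m + d → x * ι Q (e i) = 0) →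
      (∀ i, m ≤ i → i < m + d → QuadraticMap.polar Q (f i) (e i) = c) →
      x * (((List.range (m + d)).map f).map (ι Q)).prod
          * ((((List.range' m d).map e).map (ι Q)).reverse).prod
        = c ^ d • (x * (((List.range m).map f).map (ι Q)).prod)
  | m, 0, _, _ => by simp
  | m, d + 1, hx, hc => by
    have ih := mul_prod_range_mul_reverse_prod_range' e f hfe (m := m + 1) (d := d)
      (fun i hi hi' => hx i (by omega) (by omega)) (fun i hi hi' => hc i (by omega) (by omega))
    have hf : ∀ y ∈ (List.range m).map f, Q.IsOrtho y (e m) := by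
      simp only [List.mem_map, List.mem_range]
      rintro _ ⟨j, hj, rfl⟩
      exact hfe m j hj
    rw [List.range'_succ, List.map_cons, List.map_cons, List.reverse_cons, List.prod_append,
      List.prod_singleton, ← mul_assoc, show m + (d + 1) = m + 1 + d by omega, ih,
      smul_mul_assoc, List.range_succ, List.map_append, List.map_append, List.prod_append,
      List.map_singleton, List.map_singleton, List.prod_singleton, ← mul_assoc,
      mul_prod_map_ι_mul_ι_mul_ι (hx m le_rfl (by omega)) hf, hc m le_rfl (by omega), smul_smul,
      pow_succ]

theorem prod_mul_prod_mul_reverse_prod (e f : ℕ → M) {c : R} {k n : ℕ} (hk : k ≤ n)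
    (hee : ∀ i j, Q.IsOrtho (e i) (e j)) (hQe : ∀ i, Q (e i) = 0)
    (hfe : ∀ i j, j < i → Q.IsOrtho (f j) (e i))
    (hc : ∀ i < n, QuadraticMap.polar Q (f i) (e i) = c) :
    (((List.range' k (n - k)).map e).map (ι Q)).prod
        * (((List.range n).map f).map (ι Q)).prod
        * reverse (((List.range' k (n - k)).map e).map (ι Q)).prod
      = c ^ (n - k) • ((((List.range' k (n - k)).map e).map (ι Q)).prod
          * (((List.range k).map f).map (ι Q)).prod) := by
  have hx : ∀ i, k ≤ i → i < k + (n - k) →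
      (((List.range' k (n - k)).map e).map (ι Q)).prod * ι Q (e i) = 0 := by
    intro i hi hi'
    refine prod_map_ι_mul_ι_eq_zero ?_ (hQe i) ?_
    · exact List.mem_map.mpr ⟨i, List.mem_range'_1.mpr ⟨hi, hi'⟩, rfl⟩
    · simp only [List.mem_map]
      rintro _ ⟨j, -, rfl⟩
      exact hee j i
  have key := mul_prod_range_mul_reverse_prod_range' e f hfe hx fun i _ hi => hc i (by omega)
  rwa [Nat.add_sub_cancel' hk, ← reverse_prod_map_ι] at key

theorem contractLeft_prod_map_ι {d : Module.Dual R M} {l : List M} (h : ∀ x ∈ l, d x = 0) :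
    contractLeft d (l.map (ι Q)).prod = 0 := by
  induction l with
  | nil => exact contractLeft_one Q d
  | cons x t ih =>
    rw [List.map_cons, List.prod_cons, contractLeft_ι_mul, h x (.head _),
      ih fun y hy => h y (.tail _ hy), zero_smul, mul_zero, sub_zero]

theorem apply_prod_map_ι_one (D : M →ₗ[R] Module.Dual R M)
    (φ : CliffordAlgebra Q →ₐ[R] Module.End R (ExteriorAlgebra R M))
    (hφ : ∀ v, φ (ι Q v) = LinearMap.mulLeft R (ExteriorAlgebra.ι R v)
      + contractLeft (Q := (0 : QuadraticForm R M)) (D v))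
    {l : List M} (hl : l.Pairwise fun x y => D x y = 0) :
    φ (l.map (ι Q)).prod 1 = (l.map (ExteriorAlgebra.ι R)).prod := by
  induction l with
  | nil => simp
  | cons x t ih =>
    obtain ⟨hx, ht⟩ := List.pairwise_cons.mp hl
    rw [List.map_cons, List.prod_cons, map_mul, Module.End.mul_apply, ih ht, hφ,
      LinearMap.add_apply, LinearMap.mulLeft_apply, contractLeft_prod_map_ι hx, add_zero,
      List.map_cons, List.prod_cons]

end CliffordAlgebra

theorem cliffProdOn_eq_prod_map_extend_val {K V : Type*} [Field K] [AddCommGroup V]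
    [Module K V] (q : QuadraticForm K V) {m : ℕ} (g : Fin m → V) (s : Finset (Fin m)) :
    cliffProdOn q g s = ((((s.sort (· ≤ ·)).map Fin.val).map (Function.extend Fin.val g 0)).map
      (ι q)).prod := by
  rw [cliffProdOn, List.map_comp_eq_map_extend_val]

theorem extProdOn_eq_prod_map_extend_val (K : Type*) {V : Type*} [Field K] [AddCommGroup V]
    [Module K V] {m : ℕ} (g : Fin m → V) (s : Finset (Fin m)) :
    extProdOn K g s = ((((s.sort (· ≤ ·)).map Fin.val).map (Function.extend Fin.val g 0)).map
      (ExteriorAlgebra.ι K)).prod := by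
  rw [extProdOn, List.map_comp_eq_map_extend_val]

section HyperbolicFamily

variable {K V : Type*} [Field K] [CharZero K] [AddCommGroup V] [Module K V]
  (q : QuadraticForm K V)

theorem prod_mul_prod_mul_reverse_prod_of_halfPolar {e f : ℕ → V} {n k : ℕ} (hk : k ≤ n)
    (hee : ∀ i j, halfPolar q (e i) (e j) = 0)
    (hef : ∀ i j, j < i → halfPolar q (e i) (f j) = 0)
    (hef₁ : ∀ i < n, halfPolar q (e i) (f i) = 1) :
    (((List.range' k (n - k)).map e).map (ι q)).prod
        * (((List.range n).map f).map (ι q)).prod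
        * reverse (((List.range' k (n - k)).map e).map (ι q)).prod
      = (2 : K) ^ (n - k) • ((((List.range' k (n - k)).map e).map (ι q)).prod
          * (((List.range k).map f).map (ι q)).prod) :=
  CliffordAlgebra.prod_mul_prod_mul_reverse_prod e f hk
    (fun i j => (halfPolar_eq_zero_iff q).mp (hee i j))
    (fun i => halfPolar_self q (e i) ▸ hee i i)
    (fun i j hji => QuadraticMap.isOrtho_comm.mp ((halfPolar_eq_zero_iff q).mp (hef i j hji)))
    (fun i hi => QuadraticMap.polar_comm q _ _ ▸ polar_eq_two_of_halfPolar_eq_one q (hef₁ i hi))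

theorem apply_prod_mul_prod_mul_reverse_prod_one {e f : ℕ → V} {n k : ℕ} (hk : k ≤ n)
    (hee : ∀ i j, halfPolar q (e i) (e j) = 0) (hff : ∀ i j, halfPolar q (f i) (f j) = 0)
    (hef : ∀ i j, j < i → halfPolar q (e i) (f j) = 0)
    (hef₁ : ∀ i < n, halfPolar q (e i) (f i) = 1)
    (φ : CliffordAlgebra q →ₐ[K] Module.End K (ExteriorAlgebra K V))
    (hφ : ∀ v : V, φ (ι q v) = LinearMap.mulLeft K (ExteriorAlgebra.ι K v)
      + contractLeft (Q := (0 : QuadraticForm K V)) (halfPolar q v)) :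
    φ ((((List.range' k (n - k)).map e).map (ι q)).prod
        * (((List.range n).map f).map (ι q)).prod
        * reverse (((List.range' k (n - k)).map e).map (ι q)).prod) 1
      = (2 : K) ^ (n - k) • ((((List.range' k (n - k)).map e).map (ExteriorAlgebra.ι K)).prod
          * (((List.range k).map f).map (ExteriorAlgebra.ι K)).prod) := by
  rw [prod_mul_prod_mul_reverse_prod_of_halfPolar q hk hee hef hef₁, map_smul,
    LinearMap.smul_apply, ← List.prod_append, ← List.map_append,
    CliffordAlgebra.apply_prod_map_ι_one (halfPolar q) φ hφ, List.map_append, List.prod_append]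
  refine List.pairwise_append.mpr ⟨?_, ?_, ?_⟩
  · exact List.pairwise_map.mpr (List.pairwise_of_forall fun i j => hee i j)
  · exact List.pairwise_map.mpr (List.pairwise_of_forall fun i j => hff i j)
  · simp only [List.mem_map, List.mem_range'_1, List.mem_range]
    rintro _ ⟨i, ⟨hki, -⟩, rfl⟩ _ ⟨j, hjk, rfl⟩
    exact hef i j (by omega)

end HyperbolicFamily

theorem stmt17_general {K V : Type*} [Field K] [CharZero K]
    [AddCommGroup V] [Module K V]
    (q : QuadraticForm K V) (n : ℕ)
    (e f : Fin n → V)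
    (hee : ∀ i j, halfPolar q (e i) (e j) = 0)
    (hff : ∀ i j, halfPolar q (f i) (f j) = 0)
    (hef : ∀ i j, halfPolar q (e i) (f j) = if i = j then 1 else 0)
    (k : ℕ) (hk : k ≤ n) :
    -- a f a* = 2^{n−k} e_{k+1}⋯e_n f₁⋯f_k in Cl(V) …
    (cliffProdOn q e (Finset.univ.filter (fun i : Fin n => k ≤ (i : ℕ)))
        * cliffProdOn q f Finset.univ
        * reverse (cliffProdOn q e (Finset.univ.filter (fun i : Fin n => k ≤ (i : ℕ))))
      = ((2 : K) ^ (n - k)) •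
          (cliffProdOn q e (Finset.univ.filter (fun i : Fin n => k ≤ (i : ℕ)))
            * cliffProdOn q f (Finset.univ.filter (fun i : Fin n => (i : ℕ) < k)))) ∧
    -- … and hence (a f a*) • 1 = 2^{n−k} e_{k+1}∧⋯∧e_n∧f₁∧⋯∧f_k in ⋀V
    (∀ φ : CliffordAlgebra q →ₐ[K] Module.End K (ExteriorAlgebra K V),
      (∀ v : V, φ (ι q v) =
        LinearMap.mulLeft K (ExteriorAlgebra.ι K v)
          + contractLeft (Q := (0 : QuadraticForm K V)) (halfPolar q v)) →
      φ (cliffProdOn q e (Finset.univ.filter (fun i : Fin n => k ≤ (i : ℕ)))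
          * cliffProdOn q f Finset.univ
          * reverse (cliffProdOn q e
              (Finset.univ.filter (fun i : Fin n => k ≤ (i : ℕ))))) 1
        = ((2 : K) ^ (n - k)) •
            (extProdOn K e (Finset.univ.filter (fun i : Fin n => k ≤ (i : ℕ)))
              * extProdOn K f (Finset.univ.filter (fun i : Fin n => (i : ℕ) < k)))) := by
  set e' := Function.extend Fin.val e 0
  set f' := Function.extend Fin.val f 0
  have hee' : ∀ i j, halfPolar q (e' i) (e' j) = 0 := fun i j =>
    (halfPolar q).extend_val_apply_eq_zero (r := fun _ _ => True) (fun a b _ => hee a b) trivial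
  have hff' : ∀ i j, halfPolar q (f' i) (f' j) = 0 := fun i j =>
    (halfPolar q).extend_val_apply_eq_zero (r := fun _ _ => True) (fun a b _ => hff a b) trivial
  have hef' : ∀ i j, j < i → halfPolar q (e' i) (f' j) = 0 := fun i j =>
    (halfPolar q).extend_val_apply_eq_zero (r := fun i j => j < i)
      fun a b hab => by rw [hef, if_neg (Fin.ne_of_gt hab)]
  have hef₁' : ∀ i < n, halfPolar q (e' i) (f' i) = 1 := fun i hi => by
    rw [show e' i = e ⟨i, hi⟩ from Fin.val_injective.extend_apply e 0 ⟨i, hi⟩,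
      show f' i = f ⟨i, hi⟩ from Fin.val_injective.extend_apply f 0 ⟨i, hi⟩, hef,
      if_pos rfl]
  simp only [cliffProdOn_eq_prod_map_extend_val, extProdOn_eq_prod_map_extend_val,
    Fin.map_val_sort_filter_le, Fin.map_val_sort_filter_lt hk, Fin.map_val_sort_univ]
  exact ⟨prod_mul_prod_mul_reverse_prod_of_halfPolar q hk hee' hef' hef₁',
    apply_prod_mul_prod_mul_reverse_prod_one q hk hee' hff' hef' hef₁'⟩

/-- the Cartan map carries spinors of isotropic subspaces to decomposable
tensors.  For a maximal isotropic `H ⊆ V` meeting `F` in a `k`-dimensional space, with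
adapted hyperbolic basis so that `H = ⟨e_{k+1},…,e_n,f₁,…,f_k⟩`, `ω_H = e_{k+1}⋯e_n f`
and `a = e_{k+1}⋯e_n`, one has `a f a* = 2^{n−k} e_{k+1}⋯e_n f₁⋯f_k` in the Clifford
algebra, and hence `(a f a*) • 1 = 2^{n−k} e_{k+1}∧⋯∧e_n∧f₁∧⋯∧f_k ∈ ⋀ⁿV`, where `•`
is the Clifford module action of `Cl(V)` on `⋀V` via `ι + o`.  In particular the
Cartan map `ν̂₂(af)` = degree-`n` component of `(afa*)•1` sends the spinor line of `H`
to the Plücker line of `H`, so `ν̂₂` maps the isotropic Grassmann cone in its spinor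
embedding onto the isotropic Grassmann cone in its Plücker embedding. -/
theorem stmt17 {K V : Type*} [Field K] [IsAlgClosed K] [CharZero K]
    [AddCommGroup V] [Module K V] [FiniteDimensional K V]
    (q : QuadraticForm K V) (n : ℕ)
    (hdim : Module.finrank K V = 2 * n)
    (e f : Fin n → V)
    (hbasis : LinearIndependent K (Sum.elim e f))
    (hee : ∀ i j, halfPolar q (e i) (e j) = 0)
    (hff : ∀ i j, halfPolar q (f i) (f j) = 0)
    (hef : ∀ i j, halfPolar q (e i) (f j) = if i = j then 1 else 0)
    (k : ℕ) (hk : k ≤ n) :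
    -- a f a* = 2^{n−k} e_{k+1}⋯e_n f₁⋯f_k in Cl(V) …
    (cliffProdOn q e (Finset.univ.filter (fun i : Fin n => k ≤ (i : ℕ)))
        * cliffProdOn q f Finset.univ
        * reverse (cliffProdOn q e (Finset.univ.filter (fun i : Fin n => k ≤ (i : ℕ))))
      = ((2 : K) ^ (n - k)) •
          (cliffProdOn q e (Finset.univ.filter (fun i : Fin n => k ≤ (i : ℕ)))
            * cliffProdOn q f (Finset.univ.filter (fun i : Fin n => (i : ℕ) < k)))) ∧
    -- … and hence (a f a*) • 1 = 2^{n−k} e_{k+1}∧⋯∧e_n∧f₁∧⋯∧f_k in ⋀V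
    (∀ φ : CliffordAlgebra q →ₐ[K] Module.End K (ExteriorAlgebra K V),
      (∀ v : V, φ (ι q v) =
        LinearMap.mulLeft K (ExteriorAlgebra.ι K v)
          + contractLeft (Q := (0 : QuadraticForm K V)) (halfPolar q v)) →
      φ (cliffProdOn q e (Finset.univ.filter (fun i : Fin n => k ≤ (i : ℕ)))
          * cliffProdOn q f Finset.univ
          * reverse (cliffProdOn q e
              (Finset.univ.filter (fun i : Fin n => k ≤ (i : ℕ))))) 1
        = ((2 : K) ^ (n - k)) •
            (extProdOn K e (Finset.univ.filter (fun i : Fin n => k ≤ (i : ℕ)))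
              * extProdOn K f (Finset.univ.filter (fun i : Fin n => (i : ℕ) < k)))) :=
  stmt17_general q n e f hee hff hef k hk
end
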